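/- Let α, β > −1 and let n ≤ k be natural numbers. Then ∫_{−1}^{1} x^k 𝑃̃_n^{(α,β)}(x) (1−x)^α(1+x)^β dx = (1/(2^n √h_n)) · binom(k,n) · ∫_{−1}^{1} x^{k−n} (1−x)^{n+α} (1+x)^{n+β} dx, where 𝑃̃_n^{(α,β)} = P_n^{(α,β)}/√h_n is the normalized Jacobi polynomial and h_n = 2^{α+β+1} Γ(n+α+1)Γ(n+β+1) / (n! (2n+α+β+1) Γ(n+α+β+1)). -/

import Mathlib

/-!
On `(-1, 1)` the Rodrigues formula reads `P_n^{(α,β)} w_{α,β} = (-1)ⁿ/(2ⁿ n!) Dⁿ w_{n+α,n+β}`,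
where `w_{a,b}(x) = (1 - x)^a (1 + x)^b`. By induction, `Dᵐ w_{a,b} = w_{a-m,b-m} q` for a
polynomial `q`; so for `m < n` a polynomial times `Dᵐ w_{n+α,n+β}` is integrable and vanishes at
`±1`. Integrating by parts `n` times therefore moves all derivatives onto `xᵏ`, whose `n`-th
derivative is `n! binom(k, n) x^{k-n}`, and the two signs `(-1)ⁿ` cancel.
-/

open MeasureTheory

/-- The Jacobi polynomial `P_n^{(α,β)}`, defined by the Rodrigues formula. -/
noncomputable def jacobiP (α β : ℝ) (n : ℕ) (x : ℝ) : ℝ :=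
  ((-1 : ℝ) ^ n / (2 ^ n * (n.factorial : ℝ))) * (1 - x) ^ (-α) * (1 + x) ^ (-β) *
    iteratedDeriv n (fun y => (1 - y) ^ ((n : ℝ) + α) * (1 + y) ^ ((n : ℝ) + β)) x

/-- The Jacobi normalization constant `h_n`. -/
noncomputable def jacobiH (α β : ℝ) (n : ℕ) : ℝ :=
  2 ^ (α + β + 1) * Real.Gamma ((n : ℝ) + α + 1) * Real.Gamma ((n : ℝ) + β + 1) /
    ((n.factorial : ℝ) * (2 * (n : ℝ) + α + β + 1) * Real.Gamma ((n : ℝ) + α + β + 1))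

/-- The normalized Jacobi polynomial `𝑃̃_n^{(α,β)} = P_n^{(α,β)}/√h_n`. -/
noncomputable def jacobiPN (α β : ℝ) (n : ℕ) (x : ℝ) : ℝ :=
  jacobiP α β n x / Real.sqrt (jacobiH α β n)

open Set Filter Topology Polynomial intervalIntegral

noncomputable def jacobiWeight (a b x : ℝ) : ℝ := (1 - x) ^ a * (1 + x) ^ b

section JacobiWeight

variable {a b : ℝ}

lemma continuous_jacobiWeight (ha : 0 ≤ a) (hb : 0 ≤ b) : Continuous (jacobiWeight a b) :=
  ((continuous_const.sub continuous_id).rpow_const fun _ => Or.inr ha).mul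
    ((continuous_const.add continuous_id).rpow_const fun _ => Or.inr hb)

lemma jacobiWeight_one (ha : 0 < a) : jacobiWeight a b 1 = 0 := by
  simp [jacobiWeight, Real.zero_rpow ha.ne']

lemma jacobiWeight_neg_one (hb : 0 < b) : jacobiWeight a b (-1) = 0 := by
  simp [jacobiWeight, Real.zero_rpow hb.ne']

lemma intervalIntegrable_jacobiWeight (ha : -1 < a) (hb : -1 < b) :
    IntervalIntegrable (jacobiWeight a b) volume (-1) 1 := by
  have hleft : IntervalIntegrable (jacobiWeight a b) volume (-1) 0 := by
    have h := (intervalIntegrable_rpow' hb (a := 0) (b := 1)).comp_add_left 1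
    norm_num at h
    refine h.mul_continuousOn (g := fun x => (1 - x) ^ a) ?_ |>.congr_uIoo ?_
    · exact ContinuousOn.rpow_const (by fun_prop) fun x hx => Or.inl <| by
        rw [uIcc_of_le (by norm_num)] at hx; linarith [hx.2]
    · intro x _; simp only [jacobiWeight]; ring
  have hright : IntervalIntegrable (jacobiWeight a b) volume 0 1 := by
    have h := (intervalIntegrable_rpow' ha (a := 1) (b := 0)).comp_sub_left 1
    norm_num at h
    exact h.mul_continuousOn <| ContinuousOn.rpow_const (by fun_prop) fun x hx => Or.inl <| by
        rw [uIcc_of_le (by norm_num)] at hx; linarith [hx.1]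
  exact hleft.trans hright

lemma hasDerivAt_jacobiWeight_mul_eval (p : ℝ[X]) {x : ℝ} (hx : x ∈ Ioo (-1 : ℝ) 1) :
    HasDerivAt (fun y => jacobiWeight a b y * p.eval y)
      (jacobiWeight (a - 1) (b - 1) x *
        ((C b * (1 - X) - C a * (1 + X)) * p + (1 - X ^ 2) * derivative p).eval x) x := by
  have hx₁ : 0 < 1 - x := by linarith [hx.2]
  have hx₂ : 0 < 1 + x := by linarith [hx.1]
  have hA : HasDerivAt (fun y : ℝ => (1 - y) ^ a) (-1 * a * (1 - x) ^ (a - 1)) x :=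
    ((hasDerivAt_id x).const_sub 1).rpow_const (Or.inl hx₁.ne')
  have hB : HasDerivAt (fun y : ℝ => (1 + y) ^ b) (1 * b * (1 + x) ^ (b - 1)) x :=
    ((hasDerivAt_id x).const_add 1).rpow_const (Or.inl hx₂.ne')
  refine ((hA.mul hB).mul (p.hasDerivAt x)).congr_deriv ?_
  have e₁ : (1 - x) ^ a = (1 - x) ^ (a - 1) * (1 - x) := by
    rw [← Real.rpow_add_one hx₁.ne', sub_add_cancel]
  have e₂ : (1 + x) ^ b = (1 + x) ^ (b - 1) * (1 + x) := by
    rw [← Real.rpow_add_one hx₂.ne', sub_add_cancel]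
  simp only [jacobiWeight, eval_add, eval_mul, eval_sub, eval_one, eval_X, eval_C, eval_pow,
    Pi.mul_apply, e₁, e₂]
  ring

lemma exists_eqOn_iteratedDeriv_jacobiWeight (a b : ℝ) (m : ℕ) :
    ∃ p : ℝ[X], EqOn (iteratedDeriv m (jacobiWeight a b))
      (fun x => jacobiWeight (a - m) (b - m) x * p.eval x) (Ioo (-1) 1) := by
  induction m with
  | zero => exact ⟨1, fun x _ => by simp⟩
  | succ m ih =>
    obtain ⟨p, hp⟩ := ih
    refine ⟨(C (b - m) * (1 - X) - C (a - m) * (1 + X)) * p + (1 - X ^ 2) * derivative p,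
      fun x hx => ?_⟩
    rw [iteratedDeriv_succ, ((hasDerivAt_jacobiWeight_mul_eval p hx).congr_of_eventuallyEq
      (hp.eventuallyEq_of_mem (Ioo_mem_nhds hx.1 hx.2))).deriv]
    push_cast
    ring_nf

lemma hasDerivAt_iteratedDeriv_jacobiWeight (m : ℕ) {x : ℝ} (hx : x ∈ Ioo (-1 : ℝ) 1) :
    HasDerivAt (iteratedDeriv m (jacobiWeight a b))
      (iteratedDeriv (m + 1) (jacobiWeight a b) x) x := by
  obtain ⟨p, hp⟩ := exists_eqOn_iteratedDeriv_jacobiWeight a b m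
  have hd := (hasDerivAt_jacobiWeight_mul_eval p hx).congr_of_eventuallyEq
    (hp.eventuallyEq_of_mem (Ioo_mem_nhds hx.1 hx.2))
  rwa [iteratedDeriv_succ, hd.deriv]

lemma intervalIntegrable_eval_mul_iteratedDeriv_jacobiWeight {m : ℕ} (ha : (m : ℝ) < a + 1)
    (hb : (m : ℝ) < b + 1) (q : ℝ[X]) :
    IntervalIntegrable (fun x => q.eval x * iteratedDeriv m (jacobiWeight a b) x)
      volume (-1) 1 := by
  obtain ⟨p, hp⟩ := exists_eqOn_iteratedDeriv_jacobiWeight a b m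
  have hw := intervalIntegrable_jacobiWeight (a := a - m) (b := b - m) (by linarith) (by linarith)
  refine (hw.mul_continuousOn (p * q).continuous.continuousOn).congr_uIoo fun x hx => ?_
  rw [uIoo_of_le (by norm_num)] at hx
  simp only [hp hx, eval_mul]
  ring

lemma tendsto_eval_mul_iteratedDeriv_jacobiWeight {m : ℕ} (ha : (m : ℝ) < a) (hb : (m : ℝ) < b)
    (q : ℝ[X]) :
    Tendsto (fun x => q.eval x * iteratedDeriv m (jacobiWeight a b) x) (𝓝[>] (-1)) (𝓝 0) ∧
      Tendsto (fun x => q.eval x * iteratedDeriv m (jacobiWeight a b) x) (𝓝[<] 1) (𝓝 0) := by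
  obtain ⟨p, hp⟩ := exists_eqOn_iteratedDeriv_jacobiWeight a b m
  set G := fun x => jacobiWeight (a - m) (b - m) x * (q * p).eval x
  have hG : Continuous G :=
    (continuous_jacobiWeight (by linarith) (by linarith)).mul (q * p).continuous
  have hEq : EqOn G (fun x => q.eval x * iteratedDeriv m (jacobiWeight a b) x) (Ioo (-1) 1) := by
    intro x hx
    simp only [G, hp hx, eval_mul]
    ring
  constructor
  · have h := hG.continuousWithinAt (s := Ioi (-1)) (x := -1)
    rw [ContinuousWithinAt, show G (-1) = 0 by simp [G, jacobiWeight_neg_one (sub_pos.2 hb)]] at h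
    exact h.congr' (eventuallyEq_of_mem (Ioo_mem_nhdsGT (by norm_num)) hEq)
  · have h := hG.continuousWithinAt (s := Iio 1) (x := 1)
    rw [ContinuousWithinAt, show G 1 = 0 by simp [G, jacobiWeight_one (sub_pos.2 ha)]] at h
    exact h.congr' (eventuallyEq_of_mem (Ioo_mem_nhdsLT (by norm_num)) hEq)

lemma integral_eval_mul_iteratedDeriv_succ_jacobiWeight {m : ℕ} (ha : (m : ℝ) < a)
    (hb : (m : ℝ) < b) (p : ℝ[X]) :
    ∫ x in (-1 : ℝ)..1, p.eval x * iteratedDeriv (m + 1) (jacobiWeight a b) x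
      = -∫ x in (-1 : ℝ)..1, (derivative p).eval x * iteratedDeriv m (jacobiWeight a b) x := by
  have hint_deriv := intervalIntegrable_eval_mul_iteratedDeriv_jacobiWeight (a := a) (b := b)
    (m := m) (by linarith) (by linarith) (derivative p)
  have hint_succ := intervalIntegrable_eval_mul_iteratedDeriv_jacobiWeight (a := a) (b := b)
    (m := m + 1) (by push_cast; linarith) (by push_cast; linarith) p
  obtain ⟨hleft, hright⟩ := tendsto_eval_mul_iteratedDeriv_jacobiWeight ha hb p
  have hFTC := integral_eq_sub_of_hasDerivAt_of_tendsto (by norm_num)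
    (fun x hx => (p.hasDerivAt x).mul (hasDerivAt_iteratedDeriv_jacobiWeight m hx))
    (hint_deriv.add hint_succ) hleft hright
  rw [integral_add hint_deriv hint_succ] at hFTC
  linarith

lemma integral_eval_mul_iteratedDeriv_jacobiWeight {n : ℕ} (ha : (n : ℝ) < a + 1)
    (hb : (n : ℝ) < b + 1) (p : ℝ[X]) :
    ∫ x in (-1 : ℝ)..1, p.eval x * iteratedDeriv n (jacobiWeight a b) x
      = (-1) ^ n * ∫ x in (-1 : ℝ)..1, (derivative^[n] p).eval x * jacobiWeight a b x := by
  induction n generalizing p with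
  | zero => simp
  | succ n ih =>
    push_cast at ha hb
    rw [integral_eval_mul_iteratedDeriv_succ_jacobiWeight (by linarith) (by linarith),
      ih (by linarith) (by linarith), Function.iterate_succ_apply]
    ring

lemma integral_pow_mul_iteratedDeriv_jacobiWeight {n : ℕ} (ha : (n : ℝ) < a + 1)
    (hb : (n : ℝ) < b + 1) (k : ℕ) :
    ∫ x in (-1 : ℝ)..1, x ^ k * iteratedDeriv n (jacobiWeight a b) x
      = (-1) ^ n * k.descFactorial n * ∫ x in (-1 : ℝ)..1, x ^ (k - n) * jacobiWeight a b x := by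
  simpa [iterate_derivative_X_pow_eq_C_mul, mul_assoc, intervalIntegral.integral_const_mul] using
    integral_eval_mul_iteratedDeriv_jacobiWeight ha hb (X ^ k)

end JacobiWeight

lemma jacobiP_mul_jacobiWeight (α β : ℝ) (n : ℕ) {x : ℝ} (hx : x ∈ Ioo (-1 : ℝ) 1) :
    jacobiP α β n x * jacobiWeight α β x
      = (-1) ^ n / (2 ^ n * n.factorial) * iteratedDeriv n (jacobiWeight (n + α) (n + β)) x := by
  have hx₁ : 0 < 1 - x := by linarith [hx.2]
  have hx₂ : 0 < 1 + x := by linarith [hx.1]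
  rw [jacobiP, jacobiWeight, Real.rpow_neg hx₁.le, Real.rpow_neg hx₂.le]
  field_simp
  rfl

theorem normalized_jacobi_moment_general (α β : ℝ) (hα : -1 < α) (hβ : -1 < β)
    (n k : ℕ) :
    ∫ x in (-1 : ℝ)..1, x ^ k * jacobiPN α β n x * ((1 - x) ^ α * (1 + x) ^ β)
      = (1 / (2 ^ n * Real.sqrt (jacobiH α β n))) * (k.choose n : ℝ) *
          ∫ x in (-1 : ℝ)..1, x ^ (k - n) * (1 - x) ^ ((n : ℝ) + α) * (1 + x) ^ ((n : ℝ) + β) := by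
  set c : ℝ := (-1) ^ n / (2 ^ n * n.factorial * Real.sqrt (jacobiH α β n))
  have hrodrigues : ∫ x in (-1 : ℝ)..1, x ^ k * jacobiPN α β n x * ((1 - x) ^ α * (1 + x) ^ β)
      = c * ∫ x in (-1 : ℝ)..1, x ^ k * iteratedDeriv n (jacobiWeight (n + α) (n + β)) x := by
    rw [← intervalIntegral.integral_const_mul]
    refine integral_congr_Ioo_of_le (by norm_num) fun x hx => ?_
    calc x ^ k * jacobiPN α β n x * ((1 - x) ^ α * (1 + x) ^ β)
        = x ^ k / Real.sqrt (jacobiH α β n) * (jacobiP α β n x * jacobiWeight α β x) := by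
          rw [jacobiPN, jacobiWeight]; ring
      _ = _ := by rw [jacobiP_mul_jacobiWeight α β n hx]; ring
  have hmoment := integral_pow_mul_iteratedDeriv_jacobiWeight
    (a := n + α) (b := n + β) (n := n) (by linarith) (by linarith) k
  have hsign : ((-1 : ℝ) ^ n) ^ 2 = 1 := by rw [← pow_mul, mul_comm, pow_mul]; norm_num
  rw [hrodrigues, hmoment, Nat.descFactorial_eq_factorial_mul_choose]
  simp only [jacobiWeight, c, ← mul_assoc]
  push_cast
  field_simp
  rw [hsign, one_mul]

/-- The `k`-th moment of the normalized Jacobi polynomial for `n ≤ k`: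
`∫_{-1}^{1} x^k 𝑃̃_n^{(α,β)}(x)(1-x)^α(1+x)^β dx
  = (1/(2^n √h_n)) binom(k,n) ∫_{-1}^{1} x^{k-n}(1-x)^{n+α}(1+x)^{n+β} dx`. -/
theorem normalized_jacobi_moment (α β : ℝ) (hα : -1 < α) (hβ : -1 < β)
    (n k : ℕ) (hnk : n ≤ k) :
    ∫ x in (-1 : ℝ)..1, x ^ k * jacobiPN α β n x * ((1 - x) ^ α * (1 + x) ^ β)
      = (1 / (2 ^ n * Real.sqrt (jacobiH α β n))) * (k.choose n : ℝ) *
          ∫ x in (-1 : ℝ)..1, x ^ (k - n) * (1 - x) ^ ((n : ℝ) + α) * (1 + x) ^ ((n : ℝ) + β) :=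
  normalized_jacobi_moment_general α β hα hβ n k
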